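/- Let D, T1, T3 be finite types, K a positive natural number, and p a probability mass function on D × T1 × Fin K × T3 with p(d,t1,z,t3) = φ1(d,t1) · φ2(d,t1,z) · φ3(d,t1,t3) for nonnegative functions φ1, φ2, φ3. Define the marginal q(d,t1,t3) = ∑_z p(d,t1,z,t3) and s(d,t1) = ∑_z φ2(d,t1,z). Then: (i) q(d,t1,t3) = φ1(d,t1) · s(d,t1) · φ3(d,t1,t3) for all d, t1, t3; and (ii) for all d, t1, z, t3 with s(d,t1) > 0, p(d,t1,z,t3) = q(d,t1,t3) · (φ2(d,t1,z) / s(d,t1)). In other words, the joint density is recovered exactly by first using the z-marginalised density q (obtained by summing the local factor φ2 over z) and then drawing z from the normalised local factor, whose conditional distribution does not depend on t3. -/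

import Mathlib

theorem Finset.sum_mul_mul_const {ι R : Type*} [NonUnitalNonAssocSemiring R] (u : Finset ι)
    (a c : R) (f : ι → R) : ∑ i ∈ u, a * f i * c = a * (∑ i ∈ u, f i) * c := by
  rw [← Finset.sum_mul, ← Finset.mul_sum]

theorem mul_mul_eq_mul_mul_mul_div {K : Type*} [Field K] (a b c : K) {s : K} (hs : s ≠ 0) :
    a * b * c = a * s * c * (b / s) := by
  field_simp

theorem stmt_3_general {D T1 T3 : Type*} {K : ℕ} (p : D × T1 × Fin K × T3 → ℝ)
    (φ1 : D × T1 → ℝ) (φ2 : D × T1 × Fin K → ℝ) (φ3 : D × T1 × T3 → ℝ)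
    (hfact : ∀ d t1 z t3, p (d, t1, z, t3) = φ1 (d, t1) * φ2 (d, t1, z) * φ3 (d, t1, t3))
    (q : D × T1 × T3 → ℝ) (hq : ∀ d t1 t3, q (d, t1, t3) = ∑ z : Fin K, p (d, t1, z, t3))
    (s : D × T1 → ℝ) (hs : ∀ d t1, s (d, t1) = ∑ z : Fin K, φ2 (d, t1, z)) :
    (∀ d t1 t3, q (d, t1, t3) = φ1 (d, t1) * s (d, t1) * φ3 (d, t1, t3)) ∧
    (∀ d t1 z t3, 0 < s (d, t1) →
      p (d, t1, z, t3) = q (d, t1, t3) * (φ2 (d, t1, z) / s (d, t1))) := by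
  have marginal : ∀ d t1 t3, q (d, t1, t3) = φ1 (d, t1) * s (d, t1) * φ3 (d, t1, t3) := by
    intro d t1 t3
    simp only [hq, hfact, hs, Finset.sum_mul_mul_const]
  refine ⟨marginal, fun d t1 z t3 hpos => ?_⟩
  rw [marginal, hfact]
  exact mul_mul_eq_mul_mul_mul_div _ _ _ hpos.ne'

/-- Semantics preservation of discrete-parameter elimination: if a pmf `p` on
`D × T1 × Fin K × T3` factorises as `φ1 (d,t1) * φ2 (d,t1,z) * φ3 (d,t1,t3)`, then the
`z`-marginal `q` satisfies `q = φ1 * s * φ3` with `s (d,t1) = ∑ z, φ2 (d,t1,z)`, and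
wherever `s (d,t1) > 0` the joint density is recovered as
`p = q * (φ2 / s)`, a conditional for `z` not depending on `t3`. -/
theorem stmt_3 {D T1 T3 : Type*} [Fintype D] [Fintype T1] [Fintype T3]
    {K : ℕ} (hK : 0 < K)
    (p : D × T1 × Fin K × T3 → ℝ) (hp0 : ∀ t, 0 ≤ p t) (hp1 : ∑ t, p t = 1)
    (φ1 : D × T1 → ℝ) (φ2 : D × T1 × Fin K → ℝ) (φ3 : D × T1 × T3 → ℝ)
    (h1 : ∀ x, 0 ≤ φ1 x) (h2 : ∀ x, 0 ≤ φ2 x) (h3 : ∀ x, 0 ≤ φ3 x)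
    (hfact : ∀ d t1 z t3, p (d, t1, z, t3) = φ1 (d, t1) * φ2 (d, t1, z) * φ3 (d, t1, t3))
    (q : D × T1 × T3 → ℝ) (hq : ∀ d t1 t3, q (d, t1, t3) = ∑ z : Fin K, p (d, t1, z, t3))
    (s : D × T1 → ℝ) (hs : ∀ d t1, s (d, t1) = ∑ z : Fin K, φ2 (d, t1, z)) :
    (∀ d t1 t3, q (d, t1, t3) = φ1 (d, t1) * s (d, t1) * φ3 (d, t1, t3)) ∧
    (∀ d t1 z t3, 0 < s (d, t1) →
      p (d, t1, z, t3) = q (d, t1, t3) * (φ2 (d, t1, z) / s (d, t1))) :=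
  stmt_3_general p φ1 φ2 φ3 hfact q hq s hs
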